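/- With the setup above and assuming f is bounded, L_α is convex, L_α(θ_α) = ϑ_α where ϑ_α = E[X | X ≥ θ_α], and for all θ ∈ ℝ: 0 ≤ L_α(θ) - L_α(θ_α) ≤ (‖f‖_∞ / (2(1-α))) (θ - θ_α)². -/

import Mathlib

/-!
Fubini applied to `(x - a)⁺ - (x - b)⁺ = ∫ t in a..b, 1{t < x}` gives
`L b - L a = (1 - α)⁻¹ ∫ t in a..b, (F t - α)`. The integrand is monotone, continuous,
`‖f‖_∞`-Lipschitz and vanishes at `θ_α`, which yields convexity, the minimum at `θ_α` and the
quadratic bound. Continuity of `F` means `X` has no atom at `θ_α`, so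
`E[X 1{X ≥ θ_α}] = E[(X - θ_α)⁺] + θ_α (1 - α) = (1 - α) L θ_α`.
-/

open MeasureTheory ProbabilityTheory Set

/-- Reparametrising by `[0, 1]` handles both orientations of `a..b` at once. -/
theorem intervalIntegral_eq_integral_zero_one (g : ℝ → ℝ) (a b : ℝ) :
    ∫ t in a..b, g t = ∫ s in (0 : ℝ)..1, (b - a) * g (a + (b - a) * s) := by
  rw [intervalIntegral.integral_const_mul, ← smul_eq_mul,
    intervalIntegral.smul_integral_comp_add_mul]
  ring_nf

section Primitive

variable {g : ℝ → ℝ}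

theorem Monotone.convexOn_intervalIntegral (hg : Monotone g) (hgc : Continuous g) (a : ℝ) :
    ConvexOn ℝ univ (fun b => ∫ t in a..b, g t) :=
  Monotone.convexOn_univ_of_deriv
    (fun b => (hgc.integral_hasStrictDerivAt a b).hasDerivAt.differentiableAt)
    (by rwa [funext (hgc.deriv_integral g a)])

theorem Monotone.intervalIntegral_nonneg_of_eq_zero {a : ℝ} (hg : Monotone g) (hga : g a = 0)
    (b : ℝ) : 0 ≤ ∫ t in a..b, g t := by
  rw [intervalIntegral_eq_integral_zero_one]
  refine intervalIntegral.integral_nonneg zero_le_one fun s hs => ?_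
  rcases le_total a b with hab | hab
  · exact mul_nonneg (sub_nonneg.2 hab)
      (hga ▸ hg (le_add_of_nonneg_right (mul_nonneg (sub_nonneg.2 hab) hs.1)))
  · exact mul_nonneg_of_nonpos_of_nonpos (sub_nonpos.2 hab)
      (hga ▸ hg (add_le_of_nonpos_right (mul_nonpos_of_nonpos_of_nonneg (sub_nonpos.2 hab) hs.1)))

theorem intervalIntegral_le_half_mul_sq_of_abs_le {a K : ℝ} (hgc : Continuous g)
    (hK : ∀ t, |g t| ≤ K * |t - a|) (b : ℝ) :
    ∫ t in a..b, g t ≤ K / 2 * (b - a) ^ 2 := by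
  have hpoint : ∀ s ∈ Icc (0 : ℝ) 1, (b - a) * g (a + (b - a) * s) ≤ K * (b - a) ^ 2 * s := by
    intro s hs
    calc (b - a) * g (a + (b - a) * s) ≤ |b - a| * |g (a + (b - a) * s)| := by
          rw [← abs_mul]; exact le_abs_self _
      _ ≤ |b - a| * (K * |(b - a) * s|) := by
          gcongr
          simpa using hK (a + (b - a) * s)
      _ = K * (b - a) ^ 2 * s := by
          rw [abs_mul, abs_of_nonneg hs.1, ← sq_abs (b - a)]; ring
  calc ∫ t in a..b, g t = ∫ s in (0 : ℝ)..1, (b - a) * g (a + (b - a) * s) :=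
        intervalIntegral_eq_integral_zero_one g a b
    _ ≤ ∫ s in (0 : ℝ)..1, K * (b - a) ^ 2 * s :=
        intervalIntegral.integral_mono_on zero_le_one
          ((by fun_prop : Continuous _).intervalIntegrable _ _)
          ((by fun_prop : Continuous _).intervalIntegrable _ _) hpoint
    _ = K / 2 * (b - a) ^ 2 := by
        rw [intervalIntegral.integral_const_mul, integral_id]; ring

end Primitive

theorem abs_sub_le_mul_abs_sub_of_hasDerivAt {F f : ℝ → ℝ} {M : ℝ}
    (hf : ∀ t, HasDerivAt F (f t) t) (hM : ∀ t, |f t| ≤ M) (s t : ℝ) :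
    |F t - F s| ≤ M * |t - s| := by
  simpa using Convex.norm_image_sub_le_of_norm_hasDerivWithin_le
    (fun x _ => (hf x).hasDerivWithinAt) (fun x _ => hM x) convex_univ (mem_univ s) (mem_univ t)

theorem intervalIntegral_ite_lt (x a b : ℝ) :
    ∫ t in a..b, (if t < x then (1 : ℝ) else 0) = min b x - min a x := by
  have hanti : Antitone fun t : ℝ => if t < x then (1 : ℝ) else 0 := fun s t hst => by
    by_cases ht : t < x
    · simp [ht, hst.trans_lt ht]
    · simp only [ht, if_false]; split_ifs <;> norm_num
  refine intervalIntegral.integral_eq_sub_of_hasDeriv_right (f := fun t => min t x)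
    (by fun_prop) (fun t _ => ?_) hanti.intervalIntegrable
  split_ifs with htx
  · refine ((hasDerivAt_id t).congr_of_eventuallyEq ?_).hasDerivWithinAt
    filter_upwards [Iio_mem_nhds htx] with s hs using min_eq_left hs.le
  · refine (hasDerivWithinAt_const t _ x).congr (fun s hs => ?_) (min_eq_right (not_lt.1 htx))
    exact min_eq_right ((not_lt.1 htx).trans hs.le)

theorem integrable_excess {ν : Measure ℝ} [IsFiniteMeasure ν] (hν : Integrable id ν) (θ : ℝ) :
    Integrable (fun x => if θ < x then x - θ else 0) ν :=
  ((hν.sub (integrable_const θ)).indicator (measurableSet_Ioi (a := θ))).congr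
    (ae_of_all _ fun x => by by_cases h : θ < x <;> simp [h])

section Law

variable (ν : Measure ℝ) [IsProbabilityMeasure ν]

theorem integral_ite_lt_one (t : ℝ) :
    ∫ x, (if t < x then (1 : ℝ) else 0) ∂ν = 1 - cdf ν t := by
  rw [cdf_eq_real, ← probReal_compl_eq_one_sub measurableSet_Iic, compl_Iic]
  simpa [indicator_apply] using integral_indicator_one (μ := ν) (measurableSet_Ioi (a := t))

theorem measure_singleton_eq_zero_of_continuousAt_cdf {θ : ℝ} (h : ContinuousAt (cdf ν) θ) :
    ν {θ} = 0 := by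
  rw [← measure_cdf ν, StieltjesFunction.measure_singleton, h.continuousWithinAt.leftLim_eq,
    sub_self, ENNReal.ofReal_zero]

theorem integral_excess_sub_integral_excess (hν : Integrable id ν) (a b : ℝ) :
    ∫ x, (if a < x then x - a else 0) ∂ν - ∫ x, (if b < x then x - b else 0) ∂ν
      = ∫ t in a..b, (1 - cdf ν t) := by
  have : IsFiniteMeasure (volume.restrict (uIoc a b)) := by rw [uIoc]; infer_instance
  have hprod : Integrable (Function.uncurry fun t x : ℝ => if t < x then (1 : ℝ) else 0)
      ((volume.restrict (uIoc a b)).prod ν) :=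
    ((integrable_const (1 : ℝ)).indicator (measurableSet_lt measurable_fst measurable_snd)).congr
      (ae_of_all _ fun ⟨t, x⟩ => by by_cases h : t < x <;> simp [h])
  calc ∫ x, (if a < x then x - a else 0) ∂ν - ∫ x, (if b < x then x - b else 0) ∂ν
      = ∫ x, (∫ t in a..b, if t < x then (1 : ℝ) else 0) ∂ν := by
        rw [← integral_sub (integrable_excess hν a) (integrable_excess hν b)]
        refine integral_congr_ae (ae_of_all _ fun x => ?_)
        simp only [intervalIntegral_ite_lt, min_def]
        split_ifs <;> linarith
    _ = ∫ t in a..b, (1 - cdf ν t) := by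
        rw [← intervalIntegral_integral_swap hprod]
        simp only [integral_ite_lt_one]

/-- The paper's `L_α`, for `X` with law `ν`. -/
noncomputable def rockafellarUryasev (α θ : ℝ) : ℝ :=
  θ + (1 - α)⁻¹ * ∫ x, (if θ < x then x - θ else 0) ∂ν

theorem rockafellarUryasev_sub (hν : Integrable id ν) {α : ℝ} (hα : α ≠ 1) (a b : ℝ) :
    rockafellarUryasev ν α b - rockafellarUryasev ν α a
      = (1 - α)⁻¹ * ∫ t in a..b, (cdf ν t - α) := by
  have hcdf : IntervalIntegrable (cdf ν) volume a b := (monotone_cdf ν).intervalIntegrable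
  have hexcess := integral_excess_sub_integral_excess ν hν a b
  rw [intervalIntegral.integral_sub intervalIntegrable_const hcdf] at hexcess
  rw [intervalIntegral.integral_sub hcdf intervalIntegrable_const]
  simp only [rockafellarUryasev, intervalIntegral.integral_const, smul_eq_mul] at hexcess ⊢
  have hinv : (1 - α)⁻¹ * (1 - α) = 1 := inv_mul_cancel₀ (sub_ne_zero.2 hα.symm)
  linear_combination (-(1 - α)⁻¹) * hexcess - (b - a) * hinv

theorem rockafellarUryasev_eq_of_cdf_eq (hν : Integrable id ν) {α θ : ℝ} (hα : α ≠ 1)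
    (hc : ContinuousAt (cdf ν) θ) (hθ : cdf ν θ = α) :
    rockafellarUryasev ν α θ = (1 - α)⁻¹ * ∫ x, (if θ ≤ x then x else 0) ∂ν := by
  have hone : Integrable (fun x => if θ < x then (1 : ℝ) else 0) ν :=
    ((integrable_const 1).indicator (measurableSet_Ioi (a := θ))).congr
      (ae_of_all _ fun x => by by_cases h : θ < x <;> simp [h])
  have hnoatom : ∀ᵐ x ∂ν, x ≠ θ :=
    measure_eq_zero_iff_ae_notMem.1 (measure_singleton_eq_zero_of_continuousAt_cdf ν hc)
  have hsplit : ∫ x, (if θ ≤ x then x else 0) ∂ν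
      = ∫ x, (if θ < x then x - θ else 0) ∂ν + θ * (1 - α) := by
    rw [← hθ, ← integral_ite_lt_one, ← integral_const_mul,
      ← integral_add (integrable_excess hν θ) (hone.const_mul θ)]
    refine integral_congr_ae ?_
    filter_upwards [hnoatom] with x hx
    rcases hx.lt_or_gt with h | h
    · simp [not_le.2 h, not_lt.2 h.le]
    · simp [h, h.le]
  have : 1 - α ≠ 0 := sub_ne_zero.2 hα.symm
  rw [rockafellarUryasev, hsplit]
  field_simp
  ring

theorem rockafellarUryasev_eq_add_integral (hν : Integrable id ν) {α : ℝ} (hα : α ≠ 1)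
    (a : ℝ) : rockafellarUryasev ν α
      = fun θ => (1 - α)⁻¹ * (∫ t in a..θ, (cdf ν t - α)) + rockafellarUryasev ν α a :=
  funext fun θ => eq_add_of_sub_eq (rockafellarUryasev_sub ν hν hα a θ)

theorem convexOn_rockafellarUryasev (hν : Integrable id ν) {α : ℝ} (hα : α < 1)
    (hc : Continuous (cdf ν)) : ConvexOn ℝ univ (rockafellarUryasev ν α) := by
  rw [rockafellarUryasev_eq_add_integral ν hν hα.ne 0]
  exact (((monotone_cdf ν).add_const (-α)).convexOn_intervalIntegral (hc.sub continuous_const) 0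
    |>.smul (inv_nonneg.2 (sub_nonneg.2 hα.le))).add_const _

theorem rockafellarUryasev_le_of_cdf_eq (hν : Integrable id ν) {α θα : ℝ} (hα : α < 1)
    (hθα : cdf ν θα = α) (θ : ℝ) : rockafellarUryasev ν α θα ≤ rockafellarUryasev ν α θ := by
  rw [← sub_nonneg, rockafellarUryasev_sub ν hν hα.ne]
  exact mul_nonneg (inv_nonneg.2 (sub_nonneg.2 hα.le))
    (((monotone_cdf ν).add_const (-α)).intervalIntegral_nonneg_of_eq_zero (sub_eq_zero.2 hθα) θ)

theorem rockafellarUryasev_sub_le (hν : Integrable id ν) {α θα M : ℝ} (hα : α < 1)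
    (hc : Continuous (cdf ν)) (hlip : ∀ t, |cdf ν t - α| ≤ M * |t - θα|) (θ : ℝ) :
    rockafellarUryasev ν α θ - rockafellarUryasev ν α θα ≤ M / (2 * (1 - α)) * (θ - θα) ^ 2 :=
  calc rockafellarUryasev ν α θ - rockafellarUryasev ν α θα
      = (1 - α)⁻¹ * ∫ t in θα..θ, (cdf ν t - α) := rockafellarUryasev_sub ν hν hα.ne θα θ
    _ ≤ (1 - α)⁻¹ * (M / 2 * (θ - θα) ^ 2) :=
        mul_le_mul_of_nonneg_left
          (intervalIntegral_le_half_mul_sq_of_abs_le (hc.sub continuous_const) hlip θ)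
          (inv_nonneg.2 (sub_nonneg.2 hα.le))
    _ = M / (2 * (1 - α)) * (θ - θα) ^ 2 := by field_simp

end Law

theorem stmt_5 {Ω : Type*} [MeasureSpace Ω] (μ : Measure Ω) [IsProbabilityMeasure μ]
    (X : Ω → ℝ) (hX : Integrable X μ)
    (F : ℝ → ℝ) (hF : ∀ t : ℝ, F t = (μ {ω | X ω ≤ t}).toReal)
    (f : ℝ → ℝ) (hf : ∀ t : ℝ, HasDerivAt F (f t) t) (hfpos : ∀ t : ℝ, 0 ≤ f t)
    (Mf : ℝ) (hMf : ∀ t : ℝ, f t ≤ Mf)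
    (α : ℝ) (hα : α ∈ Set.Ioo (0 : ℝ) 1)
    (θα : ℝ) (hθα : F θα = α)
    (ϑα : ℝ) (hϑα : ϑα = (1 - α)⁻¹ * ∫ ω, (if θα ≤ X ω then X ω else 0) ∂μ)
    (L : ℝ → ℝ)
    (hL : ∀ θ : ℝ, L θ = θ + (1 - α)⁻¹ * ∫ ω, (if θ < X ω then X ω - θ else 0) ∂μ) :
    ConvexOn ℝ Set.univ L ∧ L θα = ϑα ∧
      ∀ θ : ℝ, 0 ≤ L θ - L θα ∧ L θ - L θα ≤ Mf / (2 * (1 - α)) * (θ - θα) ^ 2 := by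
  set ν := μ.map X
  have hXm := hX.aemeasurable
  have : IsProbabilityMeasure ν := Measure.isProbabilityMeasure_map hXm
  have hν : Integrable id ν := (integrable_map_measure aestronglyMeasurable_id hXm).2 hX
  have hcdf : F = cdf ν := funext fun t => by
    rw [hF, cdf_eq_real, map_measureReal_apply_of_aemeasurable hXm measurableSet_Iic]; rfl
  have hmap : ∀ g : ℝ → ℝ, Measurable g → ∫ x, g x ∂ν = ∫ ω, g (X ω) ∂μ :=
    fun g hg => integral_map hXm hg.aestronglyMeasurable
  have hLν : L = rockafellarUryasev ν α := funext fun θ => by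
    rw [hL, rockafellarUryasev, hmap (fun x => if θ < x then x - θ else 0)
      (.ite measurableSet_Ioi (by fun_prop) measurable_const)]
  have hϑν : ϑα = (1 - α)⁻¹ * ∫ x, (if θα ≤ x then x else 0) ∂ν := by
    rw [hϑα, hmap (fun x => if θα ≤ x then x else 0)
      (.ite measurableSet_Ici measurable_id measurable_const)]
  subst hcdf hLν hϑν
  have hc : Continuous (cdf ν) := continuous_iff_continuousAt.2 fun t => (hf t).continuousAt
  have hlip : ∀ t, |cdf ν t - α| ≤ Mf * |t - θα| := fun t => hθα ▸
    abs_sub_le_mul_abs_sub_of_hasDerivAt hf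
      (fun t => (abs_of_nonneg (hfpos t)).trans_le (hMf t)) θα t
  exact ⟨convexOn_rockafellarUryasev ν hν hα.2 hc,
    rockafellarUryasev_eq_of_cdf_eq ν hν hα.2.ne hc.continuousAt hθα,
    fun θ => ⟨sub_nonneg.2 (rockafellarUryasev_le_of_cdf_eq ν hν hα.2 hθα θ),
      rockafellarUryasev_sub_le ν hν hα.2 hc hlip θ⟩⟩
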